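/- arXiv:2006.13684 — 2 statements merged into one kernel-verified Lean document; each statement's English description precedes it below -/
import Mathlib

section
/- For every partially signed circular permutation π⃗ᶜ, the circular reversal distance d⃗ᶜ(π⃗ᶜ) to the circular signed identity equals the minimum of the linear reversal distances d⃗(σ⃗) over all linear representatives σ⃗ of the equivalence class π⃗ᶜ. -/
/-- `ReachIn R k a b`: `b` is reachable from `a` in exactly `k` steps of `R`. -/
inductive ReachIn {α : Type*} (R : α → α → Prop) : ℕ → α → α → Prop
  | refl (a : α) : ReachIn R 0 a a
  | step {k : ℕ} {a b c : α} : R a b → ReachIn R k b c → ReachIn R (k + 1) a c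

/-- A partially signed sequence: a list of pairs (element, sign). -/
abbrev SP := List (ℕ × ℤ)

/-- Negation of a whole sequence: reverse the order and negate all signs. -/
def negSeg (l : SP) : SP := (l.map fun p => (p.1, -p.2)).reverse

/-- The reversal `ρ⃗(i,j)` (1-indexed, `1 ≤ i ≤ j ≤ n`): reverse the segment of
positions `i,…,j` and negate the signs of the reversed elements. -/
def srev (i j : ℕ) (l : SP) : SP :=
  l.take (i - 1) ++ negSeg ((l.drop (i - 1)).take (j - i + 1)) ++ l.drop j

/-- One (linear) reversal step. -/
def SStep (l l' : SP) : Prop :=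
  ∃ i j : ℕ, 1 ≤ i ∧ i ≤ j ∧ j ≤ l.length ∧ l' = srev i j l

/-- `l` agrees in signs with `σ`: same underlying sequence, and the signs agree
wherever the sign of `l` is nonzero. -/
def Agrees (l σ : SP) : Prop :=
  List.Forall₂ (fun p q => p.1 = q.1 ∧ (p.2 ≠ 0 → p.2 = q.2)) l σ

/-- The reversal distance from `π` to (the class of sequences agreeing in signs
with) the signed sequence `σ`. -/
noncomputable def sdist (π σ : SP) : ℕ :=
  sInf {k : ℕ | ∃ l' : SP, ReachIn SStep k π l' ∧ Agrees l' σ}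

/-- The signed identity permutation `(⟨1,+1⟩,…,⟨n,+1⟩)`. -/
def ident (n : ℕ) : SP := (List.range n).map fun t => (t + 1, 1)

/-- All signs are `+1` or `-1`. -/
def IsSigned (l : SP) : Prop := ∀ p ∈ l, p.2 = 1 ∨ p.2 = -1

/-- All signs are in `{+1, -1, 0}`. -/
def IsPartiallySigned (l : SP) : Prop := ∀ p ∈ l, p.2 = 1 ∨ p.2 = -1 ∨ p.2 = 0

/-- The underlying sequence is a permutation of `{1,…,n}`. -/
def IsPermSeq (l : SP) : Prop := (l.map Prod.fst).Perm (List.range' 1 l.length)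

/-- Two linear representatives of the same partially signed circular permutation:
related by a cyclic rotation, possibly composed with the reflection that reverses
the order and negates all signs. -/
def EquivC (l m : SP) : Prop :=
  (∃ h : ℕ, m = l.rotate h) ∨ (∃ h : ℕ, m = (negSeg l).rotate h)

/-- One circular reversal step: a linear reversal performed on some representative
of the circular permutation. -/
def CStep (l l' : SP) : Prop :=
  ∃ m m' : SP, EquivC l m ∧ SStep m m' ∧ EquivC m' l'

/-- The circular reversal distance to the circular signed identity. -/
noncomputable def cdist (π : SP) : ℕ :=
  sInf {k : ℕ | ∃ l' : SP, ReachIn CStep k π l' ∧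
    ∃ m : SP, EquivC l' m ∧ Agrees m (ident π.length)}

/-! ### Auxiliary lemmas -/

section Aux

@[simp] lemma negSeg_nil : negSeg [] = [] := rfl

@[simp] lemma length_negSeg (l : SP) : (negSeg l).length = l.length := by simp [negSeg]

lemma negSeg_append (a b : SP) : negSeg (a ++ b) = negSeg b ++ negSeg a := by
  simp [negSeg]

lemma negSeg_cons (p : ℕ × ℤ) (t : SP) :
    negSeg (p :: t) = negSeg t ++ [(p.1, -p.2)] := by
  simp [negSeg]

lemma negSeg_singleton' (p : ℕ × ℤ) : negSeg [p] = [(p.1, -p.2)] := by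
  simp [negSeg]

@[simp] lemma negSeg_negSeg (l : SP) : negSeg (negSeg l) = l := by
  induction l with
  | nil => rfl
  | cons p t ih =>
    rw [negSeg_cons, negSeg_append, negSeg_singleton', ih]
    simp

lemma negSeg_singleton (p : ℕ × ℤ) : negSeg [p] = [(p.1, -p.2)] := by
  simp [negSeg]

lemma negSeg_ne_nil {l : SP} (h : l ≠ []) : negSeg l ≠ [] := by
  intro h0
  apply h
  have := congrArg List.length h0
  simpa using List.length_eq_zero_iff.mp (by simpa using this)

/-- Characterization of a reversal step via a decomposition. -/
lemma sstep_iff {l l' : SP} :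
    SStep l l' ↔ ∃ P Q R : SP, Q ≠ [] ∧ l = P ++ negSeg Q ++ R ∧ l' = P ++ Q ++ R := by
  constructor
  · rintro ⟨i, j, hi, hij, hj, rfl⟩
    refine ⟨l.take (i - 1), negSeg ((l.drop (i - 1)).take (j - i + 1)), l.drop j, ?_, ?_, ?_⟩
    · apply negSeg_ne_nil
      intro h0
      have h1 := congrArg List.length h0
      simp only [length_negSeg, List.length_take, List.length_drop, List.length_nil] at h1
      omega
    · rw [negSeg_negSeg, List.append_assoc]
      conv_lhs => rw [← List.take_append_drop (i - 1) l]
      congr 1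
      conv_lhs => rw [← List.take_append_drop (j - i + 1) (l.drop (i - 1))]
      congr 1
      rw [List.drop_drop]
      congr 1
      omega
    · rfl
  · rintro ⟨P, Q, R, hQ, rfl, rfl⟩
    refine ⟨P.length + 1, P.length + Q.length, by omega, ?_, ?_, ?_⟩
    · have : 0 < Q.length := List.length_pos_iff.mpr hQ
      omega
    · simp only [List.length_append, length_negSeg]
      omega
    · have hQl : 0 < Q.length := List.length_pos_iff.mpr hQ
      unfold srev
      have e1 : P.length + 1 - 1 = P.length := by omega
      have e2 : P.length + Q.length - (P.length + 1) + 1 = Q.length := by omega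
      have d1 : (P ++ negSeg Q ++ R).take P.length = P := by
        rw [List.append_assoc]; exact List.take_left' rfl
      have d2 : (P ++ negSeg Q ++ R).drop P.length = negSeg Q ++ R := by
        rw [List.append_assoc]; exact List.drop_left' rfl
      have d3 : (negSeg Q ++ R).take Q.length = negSeg Q := List.take_left' (by simp)
      have d4 : (P ++ negSeg Q ++ R).drop (P.length + Q.length) = R :=
        List.drop_left' (by simp)
      rw [e1, e2, d1, d2, d3, negSeg_negSeg, d4]
/-- `SStep` from a decomposition. -/
lemma sstep_of_decomp {P Q R : SP} (hQ : Q ≠ []) :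
    SStep (P ++ negSeg Q ++ R) (P ++ Q ++ R) :=
  sstep_iff.mpr ⟨P, Q, R, hQ, rfl, rfl⟩

lemma sstep_length {l l' : SP} (h : SStep l l') : l.length = l'.length := by
  obtain ⟨P, Q, R, -, rfl, rfl⟩ := sstep_iff.mp h
  simp

/-! ### EquivC is an equivalence relation -/

lemma equiv_refl (l : SP) : EquivC l l := Or.inl ⟨0, (List.rotate_zero l).symm⟩

lemma rotate_inv (l : SP) (h : ℕ) : ∃ h', (l.rotate h).rotate h' = l := by
  rcases eq_or_ne l [] with rfl | hl
  · exact ⟨0, by simp⟩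
  · refine ⟨l.length - h % l.length, ?_⟩
    rw [List.rotate_rotate]
    have h1 : h % l.length < l.length := Nat.mod_lt _ (List.length_pos_iff.mpr hl)
    have h2 := Nat.div_add_mod h l.length
    have e : h + (l.length - h % l.length) = l.length * (h / l.length + 1) := by
      rw [Nat.mul_add, Nat.mul_one]; omega
    rw [e, List.rotate_length_mul]

lemma negSeg_rotate_le (l : SP) (h : ℕ) (hh : h ≤ l.length) :
    negSeg (l.rotate h) = (negSeg l).rotate (l.length - h) := by
  rw [List.rotate_eq_drop_append_take hh,
    List.rotate_eq_drop_append_take (by simp)]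
  rw [negSeg_append]
  have e : negSeg l = negSeg (l.drop h) ++ negSeg (l.take h) := by
    rw [← negSeg_append, List.take_append_drop]
  rw [e, List.drop_left' (by simp), List.take_left' (by simp)]

lemma negSeg_rotate (l : SP) (h : ℕ) : ∃ s, negSeg (l.rotate h) = (negSeg l).rotate s := by
  rcases eq_or_ne l [] with rfl | hl
  · exact ⟨0, by simp⟩
  · refine ⟨l.length - h % l.length, ?_⟩
    rw [← List.rotate_mod l h]
    exact negSeg_rotate_le l _ (le_of_lt (Nat.mod_lt _ (List.length_pos_iff.mpr hl)))

lemma equiv_symm {l m : SP} (h : EquivC l m) : EquivC m l := by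
  rcases h with ⟨h, rfl⟩ | ⟨h, rfl⟩
  · obtain ⟨h', hh⟩ := rotate_inv l h
    exact Or.inl ⟨h', hh.symm⟩
  · obtain ⟨s, hs⟩ := negSeg_rotate (negSeg l) h
    rw [negSeg_negSeg] at hs
    obtain ⟨h', hh⟩ := rotate_inv l s
    refine Or.inr ⟨h', ?_⟩
    rw [hs, hh]

lemma equiv_trans {a b c : SP} (h1 : EquivC a b) (h2 : EquivC b c) : EquivC a c := by
  rcases h1 with ⟨h, rfl⟩ | ⟨h, rfl⟩ <;> rcases h2 with ⟨g, rfl⟩ | ⟨g, rfl⟩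
  · exact Or.inl ⟨h + g, List.rotate_rotate a h g⟩
  · obtain ⟨s, hs⟩ := negSeg_rotate a h
    refine Or.inr ⟨s + g, ?_⟩
    rw [hs, List.rotate_rotate]
  · exact Or.inr ⟨h + g, List.rotate_rotate (negSeg a) h g⟩
  · obtain ⟨s, hs⟩ := negSeg_rotate (negSeg a) h
    rw [negSeg_negSeg] at hs
    refine Or.inl ⟨s + g, ?_⟩
    rw [hs, List.rotate_rotate]

lemma equiv_length {l m : SP} (h : EquivC l m) : l.length = m.length := by
  rcases h with ⟨h, rfl⟩ | ⟨h, rfl⟩ <;> simp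

/-! ### Conjugation: transporting a step along the circular symmetry -/

lemma sstep_negSeg {a b : SP} (h : SStep a b) : SStep (negSeg a) (negSeg b) := by
  obtain ⟨P, Q, R, hQ, rfl, rfl⟩ := sstep_iff.mp h
  have h1 : negSeg (P ++ negSeg Q ++ R) = negSeg R ++ negSeg (negSeg Q) ++ negSeg P := by
    rw [negSeg_append, negSeg_append, List.append_assoc]
  have h2 : negSeg (P ++ Q ++ R) = negSeg R ++ negSeg Q ++ negSeg P := by
    rw [negSeg_append, negSeg_append, List.append_assoc]
  rw [h1, h2]
  exact sstep_of_decomp (negSeg_ne_nil hQ)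

lemma rotate_one_cons (p : ℕ × ℤ) (t : SP) : (p :: t).rotate 1 = t ++ [p] := by
  rw [List.rotate_cons_succ, List.rotate_zero]

/-- Conjugation by a single rotation. -/
lemma conj_rot1 {a b : SP} (h : SStep a b) :
    ∃ a', EquivC a a' ∧ SStep a' (b.rotate 1) := by
  obtain ⟨P, Q, R, hQ, rfl, rfl⟩ := sstep_iff.mp h
  rcases P with _ | ⟨p, P₀⟩
  · rcases Q with _ | ⟨q, Q₀⟩
    · exact absurd rfl hQ
    rcases eq_or_ne R [] with rfl | hR
    · -- P = [], R = [] : whole-list reversal; rotate the reflection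
      refine ⟨negSeg ((q :: Q₀).rotate 1), ?_, ?_⟩
      · -- EquivC (negSeg (q::Q₀) ) (negSeg ((q::Q₀).rotate 1))
        rw [rotate_one_cons, negSeg_append, negSeg_singleton]
        refine Or.inl ⟨(negSeg Q₀).length, ?_⟩
        have : ([] : SP) ++ negSeg (q :: Q₀) ++ [] = negSeg Q₀ ++ [(q.1, -q.2)] := by
          simp [negSeg_cons]
        rw [this, List.rotate_append_length_eq]
      · have := sstep_of_decomp (P := ([] : SP)) (R := ([] : SP))
          (Q := (q :: Q₀).rotate 1) (by simp [rotate_one_cons])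
        simpa using this
    · -- P = [], Q = q :: Q₀, R ≠ [] : reverse the complementary arc on the reflection
      refine ⟨Q₀ ++ negSeg R ++ [q], ?_, ?_⟩
      · refine Or.inr ⟨R.length + 1, ?_⟩
        have e1 : negSeg (([] : SP) ++ negSeg (q :: Q₀) ++ R)
            = (negSeg R ++ [q]) ++ Q₀ := by
          rw [List.nil_append, negSeg_append, negSeg_negSeg]
          simp
        rw [e1]
        have e2 : R.length + 1 = (negSeg R ++ [q]).length := by simp
        rw [e2, List.rotate_append_length_eq]
        simp
      · have e3 : (([] : SP) ++ (q :: Q₀) ++ R).rotate 1 = Q₀ ++ R ++ [q] := by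
          simp only [List.nil_append, List.cons_append, rotate_one_cons, List.append_assoc]
        rw [e3]
        have := sstep_of_decomp (P := Q₀) (Q := R) (R := [q]) hR
        simpa [List.append_assoc] using this
  · -- P = p :: P₀ : just rotate everything
    refine ⟨P₀ ++ negSeg Q ++ (R ++ [p]), Or.inl ⟨1, ?_⟩, ?_⟩
    · have : (p :: P₀) ++ negSeg Q ++ R = p :: (P₀ ++ negSeg Q ++ R) := by simp
      rw [this, rotate_one_cons]
      simp
    · have e : ((p :: P₀) ++ Q ++ R).rotate 1 = P₀ ++ Q ++ (R ++ [p]) := by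
        have : (p :: P₀) ++ Q ++ R = p :: (P₀ ++ Q ++ R) := by simp
        rw [this, rotate_one_cons]
        simp
      rw [e]
      exact sstep_of_decomp hQ

lemma conj_rot {a b : SP} (h : SStep a b) (n : ℕ) :
    ∃ a', EquivC a a' ∧ SStep a' (b.rotate n) := by
  induction n with
  | zero => exact ⟨a, equiv_refl a, by rwa [List.rotate_zero]⟩
  | succ n ih =>
    obtain ⟨a₁, hE1, hS1⟩ := ih
    obtain ⟨a₂, hE2, hS2⟩ := conj_rot1 hS1
    rw [List.rotate_rotate] at hS2
    exact ⟨a₂, equiv_trans hE1 hE2, hS2⟩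

/-- Main conjugation lemma: a step into `b` can be redone into any representative of `b`. -/
lemma conj_back {a b b' : SP} (hE : EquivC b b') (hS : SStep a b) :
    ∃ a', EquivC a a' ∧ SStep a' b' := by
  rcases hE with ⟨h, rfl⟩ | ⟨h, rfl⟩
  · exact conj_rot hS h
  · obtain ⟨a₁, hE1, hS1⟩ := conj_rot (sstep_negSeg hS) h
    exact ⟨a₁, equiv_trans (Or.inr ⟨0, (List.rotate_zero _).symm⟩) hE1, hS1⟩

/-! ### Reachability -/

def Reach (a b : SP) : Prop := ∃ m, ReachIn SStep m a b

lemma reachIn_trans {R : SP → SP → Prop} {k m : ℕ} {a b c : SP}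
    (h1 : ReachIn R k a b) (h2 : ReachIn R m b c) : ReachIn R (k + m) a c := by
  induction h1 with
  | refl => simpa using h2
  | step hs _ ih =>
    rw [Nat.add_right_comm]
    exact ReachIn.step hs (ih h2)

lemma Reach.trans {a b c : SP} (h1 : Reach a b) (h2 : Reach b c) : Reach a c := by
  obtain ⟨k, h1⟩ := h1; obtain ⟨m, h2⟩ := h2
  exact ⟨k + m, reachIn_trans h1 h2⟩

lemma Reach.single {a b : SP} (h : SStep a b) : Reach a b :=
  ⟨1, ReachIn.step h (ReachIn.refl b)⟩

lemma Reach.refl (a : SP) : Reach a a := ⟨0, ReachIn.refl a⟩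

lemma reach_unneg (x : SP) : Reach (negSeg x) x := by
  rcases eq_or_ne x [] with rfl | hx
  · exact Reach.refl _
  · refine Reach.single ?_
    have := sstep_of_decomp (P := ([] : SP)) (R := ([] : SP)) (Q := x) hx
    simpa using this

lemma reach_unrotate1 (x : SP) : Reach (x.rotate 1) x := by
  rcases x with _ | ⟨p, t⟩
  · rw [List.rotate_nil]; exact Reach.refl _
  rcases eq_or_ne t [] with rfl | ht
  · rw [rotate_one_cons]; exact Reach.refl _
  · rw [rotate_one_cons]
    have s1 : SStep (t ++ [p]) (negSeg t ++ [p]) := by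
      have := sstep_of_decomp (P := ([] : SP)) (Q := negSeg t) (R := [p]) (negSeg_ne_nil ht)
      simpa using this
    have s2 : SStep (negSeg t ++ [p]) (negSeg t ++ [(p.1, -p.2)]) := by
      have := sstep_of_decomp (P := negSeg t) (Q := [(p.1, -p.2)]) (R := ([] : SP)) (by simp)
      simpa [negSeg_singleton] using this
    have s3 : SStep (negSeg t ++ [(p.1, -p.2)]) (p :: t) := by
      have := sstep_of_decomp (P := ([] : SP)) (Q := p :: t) (R := ([] : SP)) (by simp)
      simpa [negSeg_cons] using this
    exact ((Reach.single s1).trans (Reach.single s2)).trans (Reach.single s3)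

lemma reach_unrotate : ∀ (n : ℕ) (x : SP), Reach (x.rotate n) x := by
  intro n
  induction n with
  | zero => intro x; rw [List.rotate_zero]; exact Reach.refl _
  | succ n ih =>
    intro x
    have e : x.rotate (n + 1) = (x.rotate 1).rotate n := by
      rw [List.rotate_rotate, Nat.add_comm]
    rw [e]
    exact (ih (x.rotate 1)).trans (reach_unrotate1 x)

lemma reach_of_equiv {a b : SP} (h : EquivC a b) : Reach b a := by
  rcases h with ⟨h, rfl⟩ | ⟨h, rfl⟩
  · exact reach_unrotate h a
  · exact Reach.trans (reach_unrotate h (negSeg a)) (reach_unneg a)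

/-! ### Main transfer lemmas -/

/-- A circular chain can be straightened into a linear chain of the same length,
starting from a suitable representative and ending at any chosen representative. -/
lemma circ_to_lin {k : ℕ} {x l' : SP} (hR : ReachIn CStep k x l') :
    ∀ m : SP, EquivC l' m → ∃ σ, EquivC x σ ∧ ReachIn SStep k σ m := by
  induction hR with
  | refl a => exact fun m hE => ⟨m, hE, ReachIn.refl m⟩
  | step hc _ ih =>
    intro m hE
    obtain ⟨σ', hEσ', hRσ'⟩ := ih m hE
    obtain ⟨y, y', hxy, hS, hy'⟩ := hc
    obtain ⟨σ, hyσ, hSσ⟩ := conj_back (equiv_trans hy' hEσ') hS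
    exact ⟨σ, equiv_trans hxy hyσ, ReachIn.step hSσ hRσ'⟩

/-- A linear chain from a representative yields a circular chain of the same length. -/
lemma lin_to_circ {k : ℕ} {σ τ : SP} (hR : ReachIn SStep k σ τ) :
    ∀ x : SP, EquivC x σ → ∃ l', ReachIn CStep k x l' ∧ EquivC l' τ := by
  induction hR with
  | refl a => exact fun x hE => ⟨x, ReachIn.refl x, hE⟩
  | @step k' a b c hs hr ih =>
    intro x hE
    obtain ⟨l', hRl', hl'⟩ := ih b (equiv_refl b)
    exact ⟨l', ReachIn.step ⟨a, b, hE, hs, equiv_refl b⟩ hRl', hl'⟩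

/-- The set whose infimum is the linear distance of `σ` to the identity. -/
def LinSet (σ : SP) : Set ℕ :=
  {k : ℕ | ∃ l' : SP, ReachIn SStep k σ l' ∧ Agrees l' (ident σ.length)}

/-- The set whose infimum is the circular distance of `π`. -/
def CircSet (π : SP) : Set ℕ :=
  {k : ℕ | ∃ l' : SP, ReachIn CStep k π l' ∧
    ∃ m : SP, EquivC l' m ∧ Agrees m (ident π.length)}

lemma circ_subset {π : SP} {k : ℕ} (hk : k ∈ CircSet π) :
    ∃ σ : SP, EquivC π σ ∧ k ∈ LinSet σ := by
  obtain ⟨l', hR, m, hE, hAg⟩ := hk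
  obtain ⟨σ, hEσ, hRσ⟩ := circ_to_lin hR m hE
  refine ⟨σ, hEσ, m, hRσ, ?_⟩
  rwa [← equiv_length hEσ]

lemma lin_subset {π σ : SP} (hE : EquivC π σ) {k : ℕ} (hk : k ∈ LinSet σ) :
    k ∈ CircSet π := by
  obtain ⟨τ, hR, hAg⟩ := hk
  obtain ⟨l', hRl', hl'⟩ := lin_to_circ hR π hE
  refine ⟨l', hRl', τ, hl', ?_⟩
  rwa [equiv_length hE]

lemma lin_nonempty_transfer {σ σ' : SP} (hE : EquivC σ σ')
    (h : (LinSet σ).Nonempty) : (LinSet σ').Nonempty := by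
  obtain ⟨k, τ, hR, hAg⟩ := h
  obtain ⟨m, hm⟩ := reach_of_equiv hE
  refine ⟨m + k, τ, reachIn_trans hm hR, ?_⟩
  rwa [← equiv_length hE]

lemma cdist_eq (π : SP) : cdist π = sInf (CircSet π) := rfl

lemma sdist_eq (σ : SP) : sdist σ (ident σ.length) = sInf (LinSet σ) := rfl

end Aux

/-- The circular reversal distance of a partially signed circular permutation
equals the minimum of the linear reversal distances of its linear representatives. -/
theorem stmt6 (π : SP) (hperm : IsPermSeq π) (hps : IsPartiallySigned π) :
    cdist π = sInf {k : ℕ | ∃ σ : SP, EquivC π σ ∧ k = sdist σ (ident σ.length)} := by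
  classical
  set B : Set ℕ := {k : ℕ | ∃ σ : SP, EquivC π σ ∧ k = sdist σ (ident σ.length)} with hB
  have hBne : B.Nonempty := ⟨sdist π (ident π.length), π, equiv_refl π, rfl⟩
  obtain ⟨σ₀, hE0, hb0⟩ := Nat.sInf_mem hBne
  rw [cdist_eq]
  apply le_antisymm
  · -- sInf (CircSet π) ≤ sInf B
    by_cases hL : (LinSet σ₀).Nonempty
    · have h1 : sInf (LinSet σ₀) ∈ LinSet σ₀ := Nat.sInf_mem hL
      have h2 : sInf (LinSet σ₀) ∈ CircSet π := lin_subset hE0 h1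
      calc sInf (CircSet π) ≤ sInf (LinSet σ₀) := Nat.sInf_le h2
        _ = sdist σ₀ (ident σ₀.length) := (sdist_eq σ₀).symm
        _ = sInf B := hb0.symm
    · have hAempty : CircSet π = ∅ := by
        rw [Set.eq_empty_iff_forall_notMem]
        intro k hk
        obtain ⟨σ, hEσ, hkσ⟩ := circ_subset hk
        exact hL (lin_nonempty_transfer (equiv_trans (equiv_symm hEσ) hE0) ⟨k, hkσ⟩)
      rw [hAempty, Nat.sInf_empty]
      exact Nat.zero_le _
  · -- sInf B ≤ sInf (CircSet π)
    by_cases hA : (CircSet π).Nonempty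
    · obtain ⟨σ, hEσ, hkσ⟩ := circ_subset (Nat.sInf_mem hA)
      have h1 : sdist σ (ident σ.length) ∈ B := ⟨σ, hEσ, rfl⟩
      calc sInf B ≤ sdist σ (ident σ.length) := Nat.sInf_le h1
        _ = sInf (LinSet σ) := sdist_eq σ
        _ ≤ sInf (CircSet π) := Nat.sInf_le hkσ
    · have hL0 : ¬ (LinSet σ₀).Nonempty := by
        intro h
        obtain ⟨k, hk⟩ := h
        exact hA ⟨k, lin_subset hE0 hk⟩
      have : LinSet σ₀ = ∅ := Set.not_nonempty_iff_eq_empty.mp hL0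
      rw [hb0, sdist_eq, this, Nat.sInf_empty]
      exact Nat.zero_le _
end

section
/- Sorting a cycle by Whitney switches corresponds to sorting a circular permutation by reversals: let G be a cycle with vertices v₁,…,vₙ (n ≥ 4) in cyclic order and edges eᵢ = v_{i−1}vᵢ (indices mod n), and let 1 ≤ i < j ≤ n with vᵢ, vⱼ non-adjacent. Then (A,B) with A = {v₁,…,vᵢ} ∪ {vⱼ,…,vₙ} and B = {vᵢ,…,vⱼ} is a Whitney separation of G, and the Whitney switch with respect to (A,B) produces the cycle whose cyclic edge order is obtained from (e₁,…,eₙ) by the circular reversal ρᶜ(i+1,j). -/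
/-!
The only edges meeting `B ∖ A` are those of the path `vᵢ … vⱼ`, and the switch applies the
transposition `(vᵢ vⱼ)` to exactly these edges: it reflects the inner path `vᵢ₊₁ … vⱼ₋₁`
between its fixed ends. The induced edge map is an involution, so the switched edge set is the
image of the cycle's edge set, which the reversal `ρᶜ(i+1,j)` only permutes. Position by
position, the `k`-th entry of the reversed and switched edge list joins the `k`-th and
`(k+1)`-st vertices of the reflected cycle, so cyclically consecutive entries share a vertex.
-/

open SimpleGraph
open Fin.NatCast

/-- A graph is 2-connected: connected, at least 3 vertices, no cut vertex. -/
def TwoConnected {V : Type*} [Fintype V] (G : SimpleGraph V) : Prop :=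
  G.Connected ∧ 3 ≤ Fintype.card V ∧ ∀ v : V, (G.induce ({v}ᶜ : Set V)).Connected

/-- `(A,B)` is a Whitney separation of `G`: `A ∪ B = V(G)`, `A∖B ≠ ∅ ≠ B∖A`,
`|A ∩ B| = 2`, and no edge joins `A∖B` to `B∖A`. -/
def WhitneySep {V : Type*} (G : SimpleGraph V) (A B : Set V) : Prop :=
  A ∪ B = Set.univ ∧ (A \ B).Nonempty ∧ (B \ A).Nonempty ∧
    (∃ u v : V, u ≠ v ∧ A ∩ B = {u, v}) ∧
    ∀ x ∈ A \ B, ∀ y ∈ B \ A, ¬G.Adj x y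

open Classical in
/-- The Whitney switch with respect to a Whitney separation with side `B` and
separator `{u,v}`: for every `w ∈ B ∖ {u,v}`, each edge `uw` is replaced by `vw`
and each edge `vw` by `uw`; all other edges are unchanged. -/
noncomputable def wswitch {V : Type*} (G : SimpleGraph V) (B : Set V) (u v : V) :
    SimpleGraph V where
  Adj x y :=
    if x ∈ B \ {u, v} ∨ y ∈ B \ {u, v} then
      G.Adj (Equiv.swap u v x) (Equiv.swap u v y)
    else G.Adj x y
  symm := by
    constructor
    intro x y hxy
    by_cases hc : x ∈ B \ {u, v} ∨ y ∈ B \ {u, v}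
    · rw [if_pos hc] at hxy
      rw [if_pos hc.symm]
      exact hxy.symm
    · rw [if_neg hc] at hxy
      rw [if_neg fun hcc => hc hcc.symm]
      exact hxy.symm
  loopless := by
    constructor
    intro x hx
    by_cases hc : x ∈ B \ {u, v} ∨ x ∈ B \ {u, v}
    · rw [if_pos hc] at hx
      exact G.loopless.irrefl _ hx
    · rw [if_neg hc] at hx
      exact G.loopless.irrefl _ hx

open Classical in
/-- The edge map induced by the Whitney switch: an edge with an endpoint in
`B ∖ A` has its endpoints `u` and `v` swapped; every other edge is kept as itself. -/
noncomputable def switchEdgeMap {V : Type*} (B A : Set V) (u v : V)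
    (e : Sym2 V) : Sym2 V :=
  if ∃ x, x ∈ e ∧ x ∈ B \ A then Sym2.map (Equiv.swap u v) e else e

/-- The cycle graph on `Fin n`: `x` and `y` are adjacent iff they are distinct and
consecutive modulo `n`. -/
def cyc (n : ℕ) [NeZero n] : SimpleGraph (Fin n) where
  Adj x y := x ≠ y ∧ (y = x + 1 ∨ x = y + 1)
  symm := by
    constructor
    intro x y h
    exact ⟨h.1.symm, h.2.symm⟩
  loopless := by
    constructor
    intro x h
    exact h.1 rfl

section WhitneySwitch

open Classical

variable {V : Type*}

theorem swap_mem_iff_of_notMem [DecidableEq V] {S : Set V} {u v x : V} (hu : u ∉ S)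
    (hv : v ∉ S) :
    Equiv.swap u v x ∈ S ↔ x ∈ S := by
  rcases eq_or_ne x u with rfl | hxu
  · rw [Equiv.swap_apply_left]; exact iff_of_false hv hu
  rcases eq_or_ne x v with rfl | hxv
  · rw [Equiv.swap_apply_right]; exact iff_of_false hu hv
  rw [Equiv.swap_apply_of_ne_of_ne hxu hxv]

theorem wswitch_adj (G : SimpleGraph V) (B : Set V) (u v x y : V) :
    (wswitch G B u v).Adj x y ↔
      if x ∈ B \ {u, v} ∨ y ∈ B \ {u, v} then G.Adj (Equiv.swap u v x) (Equiv.swap u v y)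
      else G.Adj x y :=
  Iff.rfl

theorem switchEdgeMap_mk [DecidableEq V] (B A : Set V) (u v x y : V) :
    switchEdgeMap B A u v s(x, y) =
      if x ∈ B \ A ∨ y ∈ B \ A then s(Equiv.swap u v x, Equiv.swap u v y) else s(x, y) := by
  simp only [switchEdgeMap, Sym2.mem_iff, exists_eq_or_imp, exists_eq_left, Sym2.map_mk]
  congr <;> exact Subsingleton.elim _ _

theorem switchEdgeMap_involutive {B A : Set V} {u v : V} (hu : u ∉ B \ A) (hv : v ∉ B \ A) :
    Function.Involutive (switchEdgeMap B A u v) := by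
  intro e
  induction e using Sym2.ind with
  | _ x y =>
    by_cases h : x ∈ B \ A ∨ y ∈ B \ A
    · simp only [switchEdgeMap_mk, if_pos h, swap_mem_iff_of_notMem hu hv,
        Equiv.swap_apply_self]
    · simp only [switchEdgeMap_mk, if_neg h]

theorem wswitch_edgeSet_eq_image (G : SimpleGraph V) {A B : Set V} {u v : V}
    (hAB : A ∩ B = {u, v}) :
    (wswitch G B u v).edgeSet = switchEdgeMap B A u v '' G.edgeSet := by
  have hS : B \ A = B \ {u, v} := by rw [← hAB, Set.sdiff_inter_self_eq_sdiff]
  have hinv : Function.Involutive (switchEdgeMap B A u v) :=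
    switchEdgeMap_involutive (by simp [hS]) (by simp [hS])
  rw [Set.image_eq_preimage_of_inverse hinv.leftInverse hinv.rightInverse]
  ext e
  induction e using Sym2.ind with
  | _ x y =>
    simp only [Set.mem_preimage, SimpleGraph.mem_edgeSet, switchEdgeMap_mk, wswitch_adj, hS]
    split_ifs <;> rfl

end WhitneySwitch

theorem List.take_append_reverse_append_drop_perm {α : Type*} (L : List α) {i j : ℕ}
    (hij : i ≤ j) :
    (L.take i ++ ((L.drop i).take (j - i)).reverse ++ L.drop j).Perm L := by
  conv_rhs => rw [← L.take_append_drop i, ← (L.drop i).take_append_drop (j - i),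
    List.drop_drop, Nat.add_sub_cancel' hij]
  rw [List.append_assoc]
  exact ((List.reverse_perm _).append_right _).append_left _

theorem List.getElem?_take_append_reverse_append_drop {α : Type*} (L : List α) {i j : ℕ}
    (hij : i ≤ j) (hj : j ≤ L.length) (k : ℕ) :
    (L.take i ++ ((L.drop i).take (j - i)).reverse ++ L.drop j)[k]? =
      L[if i ≤ k ∧ k < j then i + j - 1 - k else k]? := by
  have hleft : (L.take i).length = i := List.length_take_of_le (by omega)
  have hmid : ((L.drop i).take (j - i)).length = j - i := by simp; omega
  rcases lt_or_ge k i with hk | hk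
  · rw [if_neg (by omega), List.append_assoc, List.getElem?_append_left (by omega),
      List.getElem?_take_of_lt hk]
  rcases lt_or_ge k j with hk' | hk'
  · rw [if_pos ⟨hk, hk'⟩, List.getElem?_append_left (by simp; omega),
      List.getElem?_append_right (by omega), hleft, List.getElem?_reverse (by simp; omega),
      hmid, List.getElem?_take_of_lt (by omega), List.getElem?_drop]
    congr 1; omega
  · rw [if_neg (by omega), List.getElem?_append_right (by simp; omega), List.getElem?_drop]
    simp only [List.length_append, List.length_reverse, hleft, hmid]
    congr 1; omega

section CycleGraph

variable {n : ℕ} [NeZero n]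

theorem Fin.val_natCast_of_le {a : ℕ} (h : a ≤ n) :
    ((a : Fin n) : ℕ) = a ∨ (a = n ∧ ((a : Fin n) : ℕ) = 0) := by
  rcases h.lt_or_eq with h | rfl
  · exact Or.inl (Fin.val_cast_of_lt h)
  · exact Or.inr ⟨rfl, by simp⟩

theorem Fin.eq_natCast_iff_of_le {a : ℕ} (h : a ≤ n) (x : Fin n) :
    x = (a : Fin n) ↔ (x : ℕ) = a ∨ (x : ℕ) + n = a := by
  have := Fin.val_natCast_of_le h
  rw [Fin.ext_iff]
  omega

theorem Fin.eq_add_one_iff (x y : Fin n) :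
    y = x + 1 ↔ (y : ℕ) = x + 1 ∨ ((x : ℕ) + 1 = n ∧ (y : ℕ) = 0) := by
  obtain ⟨m, rfl⟩ := Nat.exists_eq_succ_of_ne_zero (NeZero.ne n)
  rw [Fin.ext_iff, Fin.val_add_one]
  split_ifs with h <;> rw [Fin.ext_iff, Fin.val_last] at h <;> omega

theorem cyc_adj_iff (x y : Fin n) :
    (cyc n).Adj x y ↔ x ≠ y ∧ ((y : ℕ) = x + 1 ∨ (x : ℕ) = y + 1 ∨
      ((x : ℕ) + 1 = n ∧ (y : ℕ) = 0) ∨ ((y : ℕ) + 1 = n ∧ (x : ℕ) = 0)) := by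
  change x ≠ y ∧ (y = x + 1 ∨ x = y + 1) ↔ _
  rw [Fin.eq_add_one_iff, Fin.eq_add_one_iff]
  tauto

theorem cyc_edgeSet (hn : 1 < n) :
    (cyc n).edgeSet = Set.range fun x : Fin n => s(x, x + 1) := by
  ext e
  induction e using Sym2.ind with
  | _ x y =>
    rw [SimpleGraph.mem_edgeSet]
    constructor
    · rintro ⟨-, rfl | rfl⟩
      exacts [⟨x, rfl⟩, ⟨y, Sym2.eq_swap⟩]
    · rintro ⟨z, hz⟩
      have hz1 : z ≠ z + 1 := fun h => by rw [Fin.eq_add_one_iff] at h; omega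
      rcases Sym2.eq_iff.mp hz with ⟨rfl, rfl⟩ | ⟨rfl, rfl⟩
      exacts [⟨hz1, Or.inl rfl⟩, ⟨hz1.symm, Or.inr rfl⟩]

variable (n) in
def cycEdgeList : List (Sym2 (Fin n)) :=
  (List.range n).map fun t : ℕ => s((t : Fin n), ((t + 1 : ℕ) : Fin n))

theorem mem_cycEdgeList (hn : 1 < n) (e : Sym2 (Fin n)) :
    e ∈ cycEdgeList n ↔ e ∈ (cyc n).edgeSet := by
  rw [cyc_edgeSet hn, cycEdgeList, List.mem_map, Set.mem_range]
  constructor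
  · rintro ⟨t, -, rfl⟩
    exact ⟨t, by push_cast; rfl⟩
  · rintro ⟨x, rfl⟩
    exact ⟨(x : ℕ), List.mem_range.mpr x.isLt, by simp⟩

theorem getElem?_cycEdgeList {t : ℕ} (ht : t < n) :
    (cycEdgeList n)[t]? = some s((t : Fin n), ((t + 1 : ℕ) : Fin n)) := by
  rw [cycEdgeList, List.getElem?_map, List.getElem?_range ht, Option.map_some]

variable (n) in
def cycArc (a b : ℕ) : Set (Fin n) :=
  (fun k : ℕ => (k : Fin n)) '' {k | a ≤ k ∧ k ≤ b}

theorem mem_cycArc_iff {a b : ℕ} (hb : b ≤ n) (x : Fin n) :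
    x ∈ cycArc n a b ↔ (a ≤ x ∧ (x : ℕ) ≤ b) ∨ (a ≤ x + n ∧ (x : ℕ) + n ≤ b) := by
  constructor
  · rintro ⟨k, ⟨hak, hkb⟩, rfl⟩
    have := Fin.val_natCast_of_le (n := n) (hkb.trans hb)
    dsimp only
    omega
  · rintro (h | h)
    · exact ⟨x, h, Fin.cast_val_eq_self x⟩
    · exact ⟨x + n, h, by simp⟩

end CycleGraph

section CycleSeparation

variable {n i j : ℕ} [NeZero n]

theorem cycArc_union_inter_cycArc (hij : i < j) (hj : j ≤ n) :
    (cycArc n 1 i ∪ cycArc n j n) ∩ cycArc n i j = {(i : Fin n), (j : Fin n)} := by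
  ext x
  have := x.isLt
  simp only [Set.mem_inter_iff, Set.mem_union, mem_cycArc_iff (le_refl n),
    mem_cycArc_iff (hij.le.trans hj), mem_cycArc_iff hj, Set.mem_insert_iff,
    Set.mem_singleton_iff, Fin.eq_natCast_iff_of_le (hij.le.trans hj),
    Fin.eq_natCast_iff_of_le hj]
  omega

theorem mem_cycArc_sdiff_iff (hij : i < j) (hj : j ≤ n) (x : Fin n) :
    x ∈ cycArc n i j \ (cycArc n 1 i ∪ cycArc n j n) ↔ i < x ∧ (x : ℕ) < j := by
  have := x.isLt
  simp only [Set.mem_sdiff, Set.mem_union, mem_cycArc_iff (le_refl n),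
    mem_cycArc_iff (hij.le.trans hj), mem_cycArc_iff hj]
  omega

theorem natCast_mem_cycArc_sdiff_iff (hij : i < j) (hj : j ≤ n) {t : ℕ} (ht : t ≤ n) :
    (t : Fin n) ∈ cycArc n i j \ (cycArc n 1 i ∪ cycArc n j n) ↔ i < t ∧ t < j := by
  have := Fin.val_natCast_of_le ht
  rw [mem_cycArc_sdiff_iff hij hj]
  omega

theorem add_two_le_of_not_cyc_adj (hi : 1 ≤ i) (hij : i < j) (hj : j ≤ n)
    (h : ¬(cyc n).Adj (i : Fin n) (j : Fin n)) : i + 2 ≤ j ∧ (2 ≤ i ∨ j < n) := by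
  have := Fin.val_natCast_of_le (n := n) (hij.le.trans hj)
  have := Fin.val_natCast_of_le (n := n) hj
  rw [cyc_adj_iff, Ne, Fin.ext_iff] at h
  omega

theorem whitneySep_cyc_cycArc (hi : 1 ≤ i) (hj : j ≤ n) (hij : i + 2 ≤ j)
    (hend : 2 ≤ i ∨ j < n) :
    WhitneySep (cyc n) (cycArc n 1 i ∪ cycArc n j n) (cycArc n i j) := by
  have hin : i < n := by omega
  refine ⟨?_, ⟨((i - 1 : ℕ) : Fin n), ?_⟩, ⟨((i + 1 : ℕ) : Fin n), ?_⟩,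
    ⟨i, j, ?_, cycArc_union_inter_cycArc (by omega) hj⟩, ?_⟩
  · ext x
    have := x.isLt
    simp only [Set.mem_union, Set.mem_univ, iff_true, mem_cycArc_iff (le_refl n),
      mem_cycArc_iff hin.le, mem_cycArc_iff hj]
    omega
  · have := Fin.val_cast_of_lt (n := n) (a := i - 1) (by omega)
    simp only [Set.mem_sdiff, Set.mem_union, mem_cycArc_iff (le_refl n),
      mem_cycArc_iff hin.le, mem_cycArc_iff hj]
    omega
  · rw [natCast_mem_cycArc_sdiff_iff (by omega) hj (by omega)]
    omega
  · have := Fin.val_natCast_of_le (n := n) hj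
    rw [Ne, Fin.ext_iff, Fin.val_cast_of_lt hin]
    omega
  · intro x hx y hy hxy
    have := x.isLt
    rw [mem_cycArc_sdiff_iff (by omega) hj] at hy
    simp only [Set.mem_sdiff, Set.mem_union, mem_cycArc_iff (le_refl n),
      mem_cycArc_iff hin.le, mem_cycArc_iff hj] at hx
    rw [cyc_adj_iff] at hxy
    omega

end CycleSeparation

section SwitchedCycle

variable {n i j : ℕ} [NeZero n]

theorem swap_natCast_of_mem_Icc (hj : j ≤ n) {t : ℕ} (ht : i ≤ t ∧ t ≤ j) :
    Equiv.swap (i : Fin n) (j : Fin n) (t : Fin n) =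
      ((if t = i then j else if t = j then i else t : ℕ) : Fin n) := by
  split_ifs with hti htj
  · rw [hti, Equiv.swap_apply_left]
  · rw [htj, Equiv.swap_apply_right]
  · have := Fin.val_natCast_of_le (n := n) (ht.2.trans hj)
    apply Equiv.swap_apply_of_ne_of_ne <;>
      rw [Ne, Fin.eq_natCast_iff_of_le (by omega)] <;> omega

variable (n i j) in
/-- The switched cycle visits `v₀, …, vᵢ, v_{j-1}, …, v_{i+1}, vⱼ, …, v_{n-1}`. -/
def switchedCycVertex (k : ℕ) : Fin n :=
  ((if i < k ∧ k < j then i + j - k else k : ℕ) : Fin n)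

theorem switchEdgeMap_reversed_cycEdge (hij : i + 2 ≤ j) (hj : j ≤ n) {k : ℕ} (hk : k < n) :
    let t := if i ≤ k ∧ k < j then i + j - 1 - k else k
    switchEdgeMap (cycArc n i j) (cycArc n 1 i ∪ cycArc n j n) (i : Fin n) (j : Fin n)
        s((t : Fin n), ((t + 1 : ℕ) : Fin n)) =
      s(switchedCycVertex n i j k, switchedCycVertex n i j (k + 1)) := by
  intro t
  have hmem := fun {s : ℕ} (hs : s ≤ n) =>
    natCast_mem_cycArc_sdiff_iff (show i < j by omega) hj hs
  unfold switchedCycVertex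
  by_cases hkij : i ≤ k ∧ k < j
  · have ht : t = i + j - 1 - k := if_pos hkij
    rw [switchEdgeMap_mk, if_pos (by rw [hmem (by omega), hmem (by omega)]; omega),
      Sym2.eq_swap, swap_natCast_of_mem_Icc hj (by omega),
      swap_natCast_of_mem_Icc hj (by omega)]
    congr 2 <;> split_ifs <;> omega
  · have ht : t = k := if_neg hkij
    rw [switchEdgeMap_mk, if_neg (by rw [hmem (by omega), hmem (by omega)]; omega),
      if_neg (by omega), if_neg (by omega), ht]

theorem getD_switched_cycEdgeList (hij : i + 2 ≤ j) (hj : j ≤ n) (d : Sym2 (Fin n)) {k : ℕ}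
    (hk : k < n) :
    let L := cycEdgeList n
    ((L.take i ++ ((L.drop i).take (j - i)).reverse ++ L.drop j).map
        (switchEdgeMap (cycArc n i j) (cycArc n 1 i ∪ cycArc n j n) (i : Fin n) (j : Fin n))).getD
        k d =
      s(switchedCycVertex n i j k, switchedCycVertex n i j (k + 1)) := by
  intro L
  have hL : L.length = n := by simp [L, cycEdgeList]
  rw [List.getD_eq_getElem?_getD, List.getElem?_map,
    List.getElem?_take_append_reverse_append_drop _ (by omega) (by omega),
    getElem?_cycEdgeList (by split_ifs <;> omega), Option.map_some, Option.getD_some]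
  exact switchEdgeMap_reversed_cycEdge hij hj hk

theorem switchedCycVertex_wrap (hj : j ≤ n) :
    switchedCycVertex n i j n = switchedCycVertex n i j 0 := by
  simp only [switchedCycVertex, if_neg (show ¬(i < n ∧ n < j) by omega),
    if_neg (show ¬(i < 0 ∧ 0 < j) by omega), Fin.natCast_self, Nat.cast_zero]

end SwitchedCycle

theorem exists_mem_getD_cyclic {α : Type*} {M : List (Sym2 α)} {d : Sym2 α} {n : ℕ}
    {w : ℕ → α} (hM : ∀ k < n, M.getD k d = s(w k, w (k + 1))) (hw : w n = w 0) {k : ℕ}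
    (hk : k < n) : ∃ x, x ∈ M.getD k d ∧ x ∈ M.getD ((k + 1) % n) d := by
  refine ⟨w (k + 1), by rw [hM k hk]; exact Sym2.mem_mk_right _ _, ?_⟩
  rcases Nat.lt_or_ge (k + 1) n with hk1 | hk1
  · rw [Nat.mod_eq_of_lt hk1, hM _ hk1]
    exact Sym2.mem_mk_left _ _
  · rw [show k + 1 = n by omega, Nat.mod_self, hM 0 (by omega), ← hw]
    exact Sym2.mem_mk_left _ _

theorem stmt15_general (n : ℕ) [NeZero n] (i j : ℕ)
    (hi : 1 ≤ i) (hij : i < j) (hj : j ≤ n)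
    (hnonadj : ¬(cyc n).Adj ((i : Fin n)) ((j : Fin n)))
    (A B : Set (Fin n))
    (hA : A = (fun k : ℕ => (k : Fin n)) '' {k | 1 ≤ k ∧ k ≤ i} ∪
      (fun k : ℕ => (k : Fin n)) '' {k | j ≤ k ∧ k ≤ n})
    (hB : B = (fun k : ℕ => (k : Fin n)) '' {k | i ≤ k ∧ k ≤ j})
    (e : ℕ → Sym2 (Fin n))
    (he : ∀ k : ℕ, e k = s(((k - 1 : ℕ) : Fin n), (k : Fin n)))
    (L M : List (Sym2 (Fin n)))
    (hL : L = (List.range n).map fun t => e (t + 1))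
    (hM : M = (L.take i ++ ((L.drop i).take (j - i)).reverse ++ L.drop j).map
      (switchEdgeMap B A ((i : Fin n)) ((j : Fin n)))) :
    (WhitneySep (cyc n) A B ∧ A ∩ B = {((i : Fin n)), ((j : Fin n))}) ∧
    (wswitch (cyc n) B ((i : Fin n)) ((j : Fin n))).edgeSet = {ed | ed ∈ M} ∧
    ∀ k : ℕ, k < n → ∃ x : Fin n,
      x ∈ M.getD k (e 1) ∧ x ∈ M.getD ((k + 1) % n) (e 1) := by
  obtain ⟨hgap, hend⟩ := add_two_le_of_not_cyc_adj hi hij hj hnonadj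
  replace hA : A = cycArc n 1 i ∪ cycArc n j n := hA
  replace hB : B = cycArc n i j := hB
  replace hL : L = cycEdgeList n := by simp only [hL, he, cycEdgeList, Nat.add_sub_cancel]
  subst hA hB hL hM
  have hAB := cycArc_union_inter_cycArc hij hj
  refine ⟨⟨whitneySep_cyc_cycArc hi hj hgap hend, hAB⟩, ?_, fun k hk => ?_⟩
  · ext ed
    rw [wswitch_edgeSet_eq_image _ hAB, Set.mem_ofPred_eq, List.mem_map]
    simp only [((cycEdgeList n).take_append_reverse_append_drop_perm hij.le).mem_iff,
      mem_cycEdgeList (by omega : 1 < n), Set.mem_image]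
  · exact exists_mem_getD_cyclic (fun k hk => getD_switched_cycEdgeList hgap hj _ hk)
      (switchedCycVertex_wrap hj) hk

/-- Sorting a cycle by Whitney switches corresponds to sorting a circular
permutation by reversals: for the cycle with vertices `v₁,…,vₙ` (`n ≥ 4`,
`v k = (k : Fin n)`, so `v 0 = v n`) and edges `e k = s(v (k-1), v k)`, and for
`1 ≤ i < j ≤ n` with `vᵢ, vⱼ` non-adjacent, the pair `(A,B)` with
`A = {v₁,…,vᵢ} ∪ {vⱼ,…,vₙ}` and `B = {vᵢ,…,vⱼ}` is a Whitney separation with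
separator `{vᵢ, vⱼ}`, and the Whitney switch with respect to `(A,B)` produces the
cycle whose cyclic edge order `M` is obtained from `(e₁,…,eₙ)` by the circular
reversal `ρᶜ(i+1,j)`: the edge set of the switched graph consists exactly of the
entries of `M`, and cyclically consecutive entries of `M` share a vertex. -/
theorem stmt15 (n : ℕ) [NeZero n] (hn : 4 ≤ n) (i j : ℕ)
    (hi : 1 ≤ i) (hij : i < j) (hj : j ≤ n)
    (hnonadj : ¬(cyc n).Adj ((i : Fin n)) ((j : Fin n)))
    (A B : Set (Fin n))
    (hA : A = (fun k : ℕ => (k : Fin n)) '' {k | 1 ≤ k ∧ k ≤ i} ∪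
      (fun k : ℕ => (k : Fin n)) '' {k | j ≤ k ∧ k ≤ n})
    (hB : B = (fun k : ℕ => (k : Fin n)) '' {k | i ≤ k ∧ k ≤ j})
    (e : ℕ → Sym2 (Fin n))
    (he : ∀ k : ℕ, e k = s(((k - 1 : ℕ) : Fin n), (k : Fin n)))
    (L M : List (Sym2 (Fin n)))
    (hL : L = (List.range n).map fun t => e (t + 1))
    (hM : M = (L.take i ++ ((L.drop i).take (j - i)).reverse ++ L.drop j).map
      (switchEdgeMap B A ((i : Fin n)) ((j : Fin n)))) :
    (WhitneySep (cyc n) A B ∧ A ∩ B = {((i : Fin n)), ((j : Fin n))}) ∧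
    (wswitch (cyc n) B ((i : Fin n)) ((j : Fin n))).edgeSet = {ed | ed ∈ M} ∧
    ∀ k : ℕ, k < n → ∃ x : Fin n,
      x ∈ M.getD k (e 1) ∧ x ∈ M.getD ((k + 1) % n) (e 1) :=
  stmt15_general n i j hi hij hj hnonadj A B hA hB e he L M hL hM
end
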